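/- arXiv:2212.05119 — 2 statements merged into one kernel-verified Lean document; each statement's English description precedes it below -/
import Mathlib

section
/- (Rankin bound) For every n ≥ 1 and every angle φ with π/2 < φ ≤ π, the maximal number A(n,φ) of points on S^{n-1} with pairwise angular distance at least φ satisfies A(n,φ) ≤ (cos φ − 1)/cos φ. -/
/-!
If `x₁, …, x_N` are unit vectors with pairwise inner products at most `c < 0`, then
`0 ≤ ‖∑ xᵢ‖² = ∑ᵢ ∑ⱼ ⟪xᵢ, xⱼ⟫ ≤ N (1 + (N - 1) c)`,
so `(N - 1) c ≥ -1`, i.e. `N ≤ (c - 1) / c`.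
-/

open scoped RealInnerProductSpace

abbrev E (n : ℕ) := EuclideanSpace ℝ (Fin n)

/-- A(n,φ): the maximal number of points on the unit sphere S^{n-1} ⊂ ℝⁿ with pairwise
angular distance at least φ, i.e. pairwise inner products at most cos φ. -/
noncomputable def A (n : ℕ) (φ : ℝ) : ℕ :=
  sSup {N : ℕ | ∃ X : Finset (E n), (∀ x ∈ X, ‖x‖ = 1) ∧
    (∀ x ∈ X, ∀ y ∈ X, x ≠ y → ⟪x, y⟫ ≤ Real.cos φ) ∧ X.card = N}

open Finset

lemma le_div_of_nonneg_mul_one_add_sub_one_mul {N c : ℝ} (hc : c < 0)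
    (h : 0 ≤ N * (1 + (N - 1) * c)) : N ≤ (c - 1) / c := by
  rw [le_div_iff_of_neg hc]
  nlinarith

section InnerProductSpace

variable {F : Type*} [NormedAddCommGroup F] [InnerProductSpace ℝ F]

lemma Finset.real_inner_sum_self (X : Finset F) :
    ⟪∑ x ∈ X, x, ∑ x ∈ X, x⟫ = ∑ x ∈ X, ∑ y ∈ X, ⟪x, y⟫ := by
  rw [sum_inner]
  simp only [inner_sum]

variable {c : ℝ} {X : Finset F}

lemma Finset.sum_real_inner_le_of_pairwise_inner_le (hX : ∀ x ∈ X, ‖x‖ = 1)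
    (hXc : ∀ x ∈ X, ∀ y ∈ X, x ≠ y → ⟪x, y⟫ ≤ c) {x : F} (hx : x ∈ X) :
    ∑ y ∈ X, ⟪x, y⟫ ≤ 1 + (#X - 1 : ℝ) * c := by
  classical
  have hoff : ∑ y ∈ X.erase x, ⟪x, y⟫ ≤ #(X.erase x) • c :=
    sum_le_card_nsmul _ _ c fun y hy => hXc x hx y (mem_of_mem_erase hy) (ne_of_mem_erase hy).symm
  rw [← add_sum_erase _ _ hx, real_inner_self_eq_norm_sq, hX x hx, one_pow]
  rw [card_erase_of_mem hx, nsmul_eq_mul, Nat.cast_pred (card_pos.mpr ⟨x, hx⟩)] at hoff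
  linarith

lemma Finset.card_le_of_pairwise_inner_le_of_neg (hc : c < 0) (hX : ∀ x ∈ X, ‖x‖ = 1)
    (hXc : ∀ x ∈ X, ∀ y ∈ X, x ≠ y → ⟪x, y⟫ ≤ c) :
    (#X : ℝ) ≤ (c - 1) / c := by
  refine le_div_of_nonneg_mul_one_add_sub_one_mul hc ?_
  calc 0 ≤ ⟪∑ x ∈ X, x, ∑ x ∈ X, x⟫ := real_inner_self_nonneg
    _ = ∑ x ∈ X, ∑ y ∈ X, ⟪x, y⟫ := X.real_inner_sum_self
    _ ≤ ∑ _x ∈ X, (1 + (#X - 1 : ℝ) * c) :=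
      sum_le_sum fun x hx => sum_real_inner_le_of_pairwise_inner_le hX hXc hx
    _ = #X * (1 + (#X - 1 : ℝ) * c) := by rw [sum_const, nsmul_eq_mul]

end InnerProductSpace

lemma A_le_of_forall_card_le {n : ℕ} {φ b : ℝ}
    (hb : ∀ X : Finset (E n), (∀ x ∈ X, ‖x‖ = 1) →
      (∀ x ∈ X, ∀ y ∈ X, x ≠ y → ⟪x, y⟫ ≤ Real.cos φ) → (#X : ℝ) ≤ b) :
    (A n φ : ℝ) ≤ b := by
  have hb₀ : 0 ≤ b := by simpa using hb ∅ (by simp) (by simp)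
  have hA : A n φ ≤ ⌊b⌋₊ := by
    refine csSup_le ⟨0, ∅, by simp⟩ ?_
    rintro N ⟨X, hX, hXφ, rfl⟩
    exact Nat.le_floor (hb X hX hXφ)
  calc (A n φ : ℝ) ≤ ⌊b⌋₊ := by exact_mod_cast hA
    _ ≤ b := Nat.floor_le hb₀

theorem rankin_bound_general (n : ℕ) (φ : ℝ) (hφ₁ : Real.pi / 2 < φ)
    (hφ₂ : φ ≤ Real.pi) :
    (A n φ : ℝ) ≤ (Real.cos φ - 1) / Real.cos φ := by
  have hcos : Real.cos φ < 0 :=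
    Real.cos_neg_of_pi_div_two_lt_of_lt hφ₁ (by linarith [Real.pi_pos])
  exact A_le_of_forall_card_le fun X hX hXφ => card_le_of_pairwise_inner_le_of_neg hcos hX hXφ

/-- Rankin bound: for every n ≥ 1 and π/2 < φ ≤ π, A(n,φ) ≤ (cos φ − 1)/cos φ. -/
theorem rankin_bound (n : ℕ) (hn : 1 ≤ n) (φ : ℝ) (hφ₁ : Real.pi / 2 < φ)
    (hφ₂ : φ ≤ Real.pi) :
    (A n φ : ℝ) ≤ (Real.cos φ - 1) / Real.cos φ :=
  rankin_bound_general n φ hφ₁ hφ₂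
end

section
/- The set of code points of spherical codes of dimension n lies below the curve R = (1/n)·log₂(min{n+1, (cos φ − 1)/cos φ}) in the large angle region: for every spherical code X ⊂ S^{n-1} with minimal angle φ_X ∈ (π/2, π], the rate R_X = (1/n)·log₂(#X) satisfies R_X ≤ (1/n)·log₂(min{n+1, (cos φ_X − 1)/cos φ_X}). -/
/-!
Since π/2 < φ ≤ π, distinct code words have inner product at most cos φ < 0. Vectors with pairwise
negative inner products are few: removing one of them leaves a linearly independent family
(simplex bound, #X ≤ n + 1), and expanding ‖∑ x‖² ≥ 0 gives #X (1 + (#X − 1) cos φ) ≥ 0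
(Rankin bound, #X ≤ (cos φ − 1)/cos φ). Taking log₂ of the smaller bound gives the rate bound.
-/

open scoped RealInnerProductSpace

open Finset Module

section InnerProductSpace

variable {F : Type*} [NormedAddCommGroup F] [InnerProductSpace ℝ F]

theorem eq_zero_of_sum_smul_eq_zero_of_inner_neg {ι : Type*} {s : Finset ι} {w : ι → ℝ}
    {v : ι → F} {x : F} (hw : ∀ i ∈ s, 0 ≤ w i) (hv : ∀ i ∈ s, ⟪v i, x⟫ < 0)
    (hsum : ∑ i ∈ s, w i • v i = 0) : ∀ i ∈ s, w i = 0 := by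
  have hterm : ∀ i ∈ s, w i * ⟪v i, x⟫ ≤ 0 := fun i hi =>
    mul_nonpos_of_nonneg_of_nonpos (hw i hi) (hv i hi).le
  have hzero : ∑ i ∈ s, w i * ⟪v i, x⟫ = 0 := by
    simpa only [sum_inner, real_inner_smul_left, inner_zero_left] using congrArg (⟪·, x⟫) hsum
  intro i hi
  exact (mul_eq_zero.1 ((sum_eq_zero_iff_of_nonpos hterm).1 hzero i hi)).resolve_right (hv i hi).ne

/-- Split a vanishing combination `∑ gᵢ vᵢ = 0` as `u = ∑ gᵢ⁺ vᵢ = ∑ gᵢ⁻ vᵢ`; then `‖u‖² ≤ 0`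
because the two sums have disjoint supports, and pairing with `x` kills both sets of weights. -/
theorem linearIndependent_of_pairwise_inner_nonpos_of_inner_neg {ι : Type*} [Fintype ι]
    {v : ι → F} {x : F} (hv : Pairwise fun i j => ⟪v i, v j⟫ ≤ 0) (hx : ∀ i, ⟪v i, x⟫ < 0) :
    LinearIndependent ℝ v := by
  rw [Fintype.linearIndependent_iff]
  intro g hg
  set u := ∑ i, (g i)⁺ • v i with hu_pos
  have hu_neg : u = ∑ i, (g i)⁻ • v i := by
    rw [← sub_eq_zero, hu_pos, ← sum_sub_distrib]
    simpa only [← sub_smul, posPart_sub_negPart] using hg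
  have hparts (a : ℝ) : a⁺ * a⁻ = 0 := by
    rcases le_total a 0 with h | h <;> simp [h]
  have hu : u = 0 := by
    refine inner_self_eq_zero.1 (le_antisymm ?_ real_inner_self_nonneg)
    calc ⟪u, u⟫ = ⟪∑ i, (g i)⁺ • v i, ∑ j, (g j)⁻ • v j⟫ := by rw [← hu_pos, ← hu_neg]
      _ = ∑ i, ∑ j, (g i)⁺ * (g j)⁻ * ⟪v i, v j⟫ := by
        rw [sum_inner]
        simp only [inner_sum, real_inner_smul_left, real_inner_smul_right]
        exact sum_congr rfl fun i _ => sum_congr rfl fun j _ => by ring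
      _ ≤ 0 := sum_nonpos fun i _ => sum_nonpos fun j _ => by
        by_cases hij : i = j
        · rw [hij, hparts, zero_mul]
        · exact mul_nonpos_of_nonneg_of_nonpos
            (mul_nonneg (posPart_nonneg _) (negPart_nonneg _)) (hv hij)
  have hpos := eq_zero_of_sum_smul_eq_zero_of_inner_neg (s := univ)
    (fun i _ => posPart_nonneg (g i)) (fun i _ => hx i) (hu_pos ▸ hu)
  have hneg := eq_zero_of_sum_smul_eq_zero_of_inner_neg (s := univ)
    (fun i _ => negPart_nonneg (g i)) (fun i _ => hx i) (hu_neg ▸ hu)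
  intro i
  rw [← posPart_sub_negPart (g i), hpos i (mem_univ i), hneg i (mem_univ i), sub_zero]

theorem card_le_finrank_add_one_of_pairwise_inner_neg [FiniteDimensional ℝ F] (X : Finset F)
    (hX : (X : Set F).Pairwise fun x y => ⟪x, y⟫ < 0) : #X ≤ finrank ℝ F + 1 := by
  classical
  rcases X.eq_empty_or_nonempty with rfl | ⟨x₀, hx₀⟩
  · simp
  have hli : LinearIndependent ℝ (fun x => x : X.erase x₀ → F) :=
    linearIndependent_of_pairwise_inner_nonpos_of_inner_neg (x := x₀)
      (fun i j hij => (hX (mem_of_mem_erase i.2) (mem_of_mem_erase j.2)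
        (Subtype.coe_injective.ne hij)).le)
      (fun i => hX (mem_of_mem_erase i.2) hx₀ (ne_of_mem_erase i.2))
  have := hli.finset_card_le_finrank
  rw [card_erase_of_mem hx₀] at this
  omega

theorem card_le_sub_one_div_of_pairwise_inner_le (X : Finset F) (hX : ∀ x ∈ X, ‖x‖ = 1)
    {c : ℝ} (hc : c < 0) (hsep : (X : Set F).Pairwise fun x y => ⟪x, y⟫ ≤ c) :
    ((#X : ℕ) : ℝ) ≤ (c - 1) / c := by
  classical
  set m : ℝ := ((#X : ℕ) : ℝ)
  have hbound : ∀ x ∈ X, ∀ y ∈ X, ⟪x, y⟫ ≤ c + if x = y then 1 - c else 0 := by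
    intro x hx y hy
    split_ifs with hxy
    · subst hxy
      simp [hX x hx]
    · simpa using hsep hx hy hxy
  have hgram : 0 ≤ m * (m * c + (1 - c)) := calc
    0 ≤ ⟪∑ x ∈ X, x, ∑ y ∈ X, y⟫ := real_inner_self_nonneg
    _ = ∑ x ∈ X, ∑ y ∈ X, ⟪x, y⟫ := by rw [sum_inner]; simp only [inner_sum]
    _ ≤ ∑ x ∈ X, ∑ y ∈ X, (c + if x = y then 1 - c else 0) :=
      sum_le_sum fun x hx => sum_le_sum fun y hy => hbound x hx y hy
    _ = m * (m * c + (1 - c)) := by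
      simp [sum_add_distrib, sum_ite_eq, m]
      ring
  rw [le_div_iff_of_neg hc]
  rcases X.eq_empty_or_nonempty with rfl | hne
  · simp [m]
    linarith
  have hm : 0 < m := by simpa [m] using hne.card_pos
  nlinarith

end InnerProductSpace

theorem large_angle_rate_bound_general (n : ℕ) (X : Finset (E n)) (hne : X.Nonempty)
    (hunit : ∀ x ∈ X, ‖x‖ = 1) (φ : ℝ) (hφ₁ : Real.pi / 2 < φ) (hφ₂ : φ ≤ Real.pi)
    (hsep : ∀ x ∈ X, ∀ y ∈ X, x ≠ y → ⟪x, y⟫ ≤ Real.cos φ) :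
    (1 / n : ℝ) * Real.logb 2 (X.card)
      ≤ (1 / n : ℝ) * Real.logb 2 (min ((n : ℝ) + 1) ((Real.cos φ - 1) / Real.cos φ)) := by
  have hcos : Real.cos φ < 0 :=
    Real.cos_neg_of_pi_div_two_lt_of_lt hφ₁ (by linarith [Real.pi_pos])
  have hsimplex : ((#X : ℕ) : ℝ) ≤ n + 1 := by
    have := card_le_finrank_add_one_of_pairwise_inner_neg X
      fun x hx y hy hxy => (hsep x hx y hy hxy).trans_lt hcos
    rw [finrank_euclideanSpace_fin] at this
    exact_mod_cast this
  have hrankin := card_le_sub_one_div_of_pairwise_inner_le X hunit hcos hsep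
  gcongr
  · norm_num
  · exact le_min hsimplex hrankin

/-- In the large angle region π/2 < φ ≤ π, the code point of any spherical code
X ⊂ S^{n-1} with minimal angle φ lies below the curve
R = (1/n)·log₂(min{n+1, (cos φ − 1)/cos φ}). -/
theorem large_angle_rate_bound (n : ℕ) (hn : 1 ≤ n) (X : Finset (E n)) (hne : X.Nonempty)
    (hunit : ∀ x ∈ X, ‖x‖ = 1) (φ : ℝ) (hφ₁ : Real.pi / 2 < φ) (hφ₂ : φ ≤ Real.pi)
    (hsep : ∀ x ∈ X, ∀ y ∈ X, x ≠ y → ⟪x, y⟫ ≤ Real.cos φ) :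
    (1 / n : ℝ) * Real.logb 2 (X.card)
      ≤ (1 / n : ℝ) * Real.logb 2 (min ((n : ℝ) + 1) ((Real.cos φ - 1) / Real.cos φ)) :=
  large_angle_rate_bound_general n X hne hunit φ hφ₁ hφ₂ hsep
end
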